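/- Let F be a probability measure on (0,∞), let 0 < δ < 1 and α > 0 be such that ∫₀^∞ e^{α(log(1+u))^{δ}} F(du) < ∞. Let δ' ∈ (0,δ] and α' > 0, with α' < α in the case δ' = δ. Define V(x) := exp( α' (log x)^{δ'} ) for x ≥ 1. Then: (a) lim_{x→∞} (log x)^{1−δ'} · V(x)^{−1} · ∫₀^∞ ( V(x+u) − V(x) ) F(du) = 0; and (b) for every λ > 0, μ > 0 and ε ∈ (0,1) there exists a constant b < ∞ such that for all x ≥ e, λ ∫₀^∞ ( V(x+u) − V(x) ) F(du) − μ x V'(x) ≤ −(1−ε) μ α' δ' (log x)^{δ'−1} V(x) + b. -/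

import Mathlib

/-!
Write `s = log x`, `t = log (x + u)`, `V = exp (α' (log ·)^δ')` and `Δ = α' (t^δ' - s^δ')`, so
that `V (x + u) / V x = e^Δ`. Concavity of `r ↦ r^δ'` gives `Δ ≤ α' δ' s^(δ'-1) (t - s)` and
`Δ ≤ α' (t - s)^δ'`, while `t - s` is at most both `log (1 + u)` and `u / x`. Together with
`e^Δ - 1 ≤ Δ e^Δ`, the normalised integrand `s^(1-δ') (V (x + u) / V x - 1)` is bounded by
`α' δ' ℓ e^(α' ℓ^δ')` with `ℓ = log (1 + u)`, which is `F`-integrable because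
`ℓ e^(α' ℓ^δ') = O(e^(α ℓ^δ))`, and by `α' δ' (u / x) e^(α' ℓ^δ') → 0`. Dominated convergence
gives (a). Since `x V' x = α' δ' s^(δ'-1) V x`, part (a) makes the jump term eventually smaller
than `ε` times the mean-reversion term, and on the remaining bounded range of `x` it is bounded.
-/

open MeasureTheory Filter Real Set
open scoped Topology

lemma rpow_sub_rpow_le_mul_sub {p s t : ℝ} (hp0 : 0 ≤ p) (hp1 : p ≤ 1) (hs : 0 < s)
    (hst : s ≤ t) : t ^ p - s ^ p ≤ p * s ^ (p - 1) * (t - s) := by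
  have hbern := rpow_one_add_le_one_add_mul_self (s := (t - s) / s)
    (by linarith [div_nonneg (sub_nonneg.2 hst) hs.le]) hp0 hp1
  rw [show 1 + (t - s) / s = t / s by field_simp; ring, div_rpow (hs.le.trans hst) hs.le,
    div_le_iff₀ (rpow_pos_of_pos hs p)] at hbern
  rw [rpow_sub hs, rpow_one]
  have : s ^ p * (1 + p * ((t - s) / s)) = s ^ p + p * (s ^ p / s) * (t - s) := by ring
  linarith

lemma rpow_sub_rpow_le_rpow_sub {p s t : ℝ} (hp0 : 0 ≤ p) (hp1 : p ≤ 1) (hs : 0 ≤ s)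
    (hst : s ≤ t) : t ^ p - s ^ p ≤ (t - s) ^ p := by
  have := rpow_add_le_add_rpow hs (sub_nonneg.2 hst) hp0 hp1
  rw [add_sub_cancel] at this
  linarith

lemma exp_sub_one_le_mul_exp (x : ℝ) : exp x - 1 ≤ x * exp x := by
  have h := mul_le_mul_of_nonneg_right (one_sub_le_exp_neg x) (exp_pos x).le
  rw [← exp_add, neg_add_cancel, exp_zero] at h
  linarith

lemma rpow_one_sub_mul_exp_sub_one_le {a p s t d : ℝ} (ha : 0 ≤ a) (hp0 : 0 < p) (hp1 : p ≤ 1)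
    (hs : 0 < s) (hst : s ≤ t) (hd : t - s ≤ d) :
    s ^ (1 - p) * (exp (a * t ^ p - a * s ^ p) - 1) ≤ a * p * d * exp (a * (t - s) ^ p) := by
  set Δ := a * t ^ p - a * s ^ p
  have hΔ_le : Δ ≤ a * p * s ^ (p - 1) * d := by
    have := rpow_sub_rpow_le_mul_sub hp0.le hp1 hs hst
    have : p * s ^ (p - 1) * (t - s) ≤ p * s ^ (p - 1) * d := by gcongr
    simp only [Δ]; nlinarith
  have hexp_le : exp Δ ≤ exp (a * (t - s) ^ p) := by
    have := rpow_sub_rpow_le_rpow_sub hp0.le hp1 hs.le hst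
    exact exp_le_exp.2 (by simp only [Δ]; nlinarith)
  have hd0 : 0 ≤ d := by linarith
  calc s ^ (1 - p) * (exp Δ - 1) ≤ s ^ (1 - p) * (Δ * exp Δ) := by
        gcongr; exact exp_sub_one_le_mul_exp Δ
    _ ≤ s ^ (1 - p) * (a * p * s ^ (p - 1) * d * exp (a * (t - s) ^ p)) := by
        gcongr
    _ = s ^ (1 - p) * s ^ (p - 1) * (a * p * d * exp (a * (t - s) ^ p)) := by ring
    _ = a * p * d * exp (a * (t - s) ^ p) := by
        rw [← rpow_add hs, show 1 - p + (p - 1) = 0 by ring, rpow_zero, one_mul]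

lemma log_add_sub_log_le_log_one_add {x u : ℝ} (hx : 1 ≤ x) (hu : 0 ≤ u) :
    log (x + u) - log x ≤ log (1 + u) := by
  rw [← log_div (by positivity) (by positivity)]
  exact log_le_log (by positivity) (by rw [div_le_iff₀ (by positivity)]; nlinarith)

lemma log_add_sub_log_le_div {x u : ℝ} (hx : 0 < x) (hu : 0 ≤ u) :
    log (x + u) - log x ≤ u / x := by
  rw [← log_div (by positivity) hx.ne']
  calc log ((x + u) / x) ≤ (x + u) / x - 1 := log_le_sub_one_of_pos (by positivity)
    _ = u / x := by field_simp; ring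

lemma eventually_rpow_le_mul_rpow {α α' δ δ' : ℝ} (hα : 0 < α) (hδ'le : δ' ≤ δ)
    (hcase : δ' = δ → α' < α) :
    ∃ β < α, ∀ᶠ L in atTop, α' * L ^ δ' ≤ β * L ^ δ := by
  rcases hδ'le.eq_or_lt with rfl | hlt
  · exact ⟨α', hcase rfl, Eventually.of_forall fun _ => le_rfl⟩
  refine ⟨α / 2, by linarith, ?_⟩
  have hsmall := ((tendsto_rpow_neg_atTop (sub_pos.2 hlt)).const_mul α').eventually
    (ge_mem_nhds (show α' * 0 < α / 2 by linarith))
  filter_upwards [hsmall, eventually_gt_atTop 0] with L hL hL0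
  have hsplit : L ^ δ' = L ^ (-(δ - δ')) * L ^ δ := by
    rw [← rpow_add hL0]; ring_nf
  rw [hsplit, ← mul_assoc]
  exact mul_le_mul_of_nonneg_right hL (rpow_nonneg hL0.le δ)

lemma eventually_mul_exp_rpow_le_exp_rpow {α α' δ δ' : ℝ} (hα : 0 < α) (hδ : 0 < δ)
    (hδ'le : δ' ≤ δ) (hcase : δ' = δ → α' < α) :
    ∀ᶠ L in atTop, L * exp (α' * L ^ δ') ≤ exp (α * L ^ δ) := by
  obtain ⟨β, hβ, hpow⟩ := eventually_rpow_le_mul_rpow hα hδ'le hcase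
  have hlog := (isLittleO_log_rpow_atTop hδ).bound (sub_pos.2 hβ)
  filter_upwards [hpow, hlog, eventually_gt_atTop 0] with L hpow hlog hL0
  rw [norm_eq_abs, norm_of_nonneg (rpow_nonneg hL0.le δ)] at hlog
  calc L * exp (α' * L ^ δ') = exp (log L + α' * L ^ δ') := by rw [exp_add, exp_log hL0]
    _ ≤ exp (α * L ^ δ) := exp_le_exp.2 (by linarith [le_abs_self (log L)])

lemma exists_mul_exp_rpow_le_add_exp_rpow {α α' δ δ' : ℝ} (hα : 0 < α) (hα' : 0 ≤ α')
    (hδ : 0 < δ) (hδ'0 : 0 ≤ δ') (hδ'le : δ' ≤ δ) (hcase : δ' = δ → α' < α) :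
    ∃ M, ∀ L, 0 ≤ L → L * exp (α' * L ^ δ') ≤ M + exp (α * L ^ δ) := by
  obtain ⟨L₀, hL₀⟩ := (eventually_mul_exp_rpow_le_exp_rpow hα hδ hδ'le hcase).exists_forall_of_atTop
  refine ⟨max L₀ 0 * exp (α' * max L₀ 0 ^ δ'), fun L hL => ?_⟩
  have hM : 0 ≤ max L₀ 0 * exp (α' * max L₀ 0 ^ δ') := by positivity
  rcases le_total L (max L₀ 0) with hle | hge
  · have : L * exp (α' * L ^ δ') ≤ max L₀ 0 * exp (α' * max L₀ 0 ^ δ') := by gcongr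
    linarith [exp_pos (α * L ^ δ)]
  · linarith [hL₀ L ((le_max_left _ _).trans hge)]

lemma integrable_mul_exp_rpow {X : Type*} [MeasurableSpace X] {μ : Measure X} [IsFiniteMeasure μ]
    {f : X → ℝ} {α α' δ δ' : ℝ} (hα : 0 < α) (hα' : 0 ≤ α')
    (hδ : 0 < δ) (hδ'0 : 0 ≤ δ') (hδ'le : δ' ≤ δ) (hcase : δ' = δ → α' < α)
    (hf : Measurable f) (hf0 : ∀ᵐ x ∂μ, 0 ≤ f x)
    (hint : Integrable (fun x => exp (α * f x ^ δ)) μ) :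
    Integrable (fun x => f x * exp (α' * f x ^ δ')) μ := by
  obtain ⟨M, hM⟩ := exists_mul_exp_rpow_le_add_exp_rpow hα hα' hδ hδ'0 hδ'le hcase
  refine ((integrable_const M).add hint).mono' (by fun_prop) ?_
  filter_upwards [hf0] with x hx
  rw [norm_of_nonneg (by positivity)]
  exact hM _ hx

lemma exists_le_add_of_eventually_le_of_bddAbove {J D : ℝ → ℝ} {a : ℝ}
    (hJD : ∀ᶠ x in atTop, J x ≤ D x) (hJ : ∀ X, BddAbove (J '' Icc a X))
    (hD : ∀ x, a ≤ x → 0 ≤ D x) :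
    ∃ b, ∀ x, a ≤ x → J x ≤ D x + b := by
  obtain ⟨X, hX⟩ := hJD.exists_forall_of_atTop
  obtain ⟨B, hB⟩ := hJ X
  refine ⟨max B 0, fun x hx => ?_⟩
  rcases le_total x X with hxX | hXx
  · linarith [hB ⟨x, ⟨hx, hxX⟩, rfl⟩, le_max_left B 0, hD x hx]
  · linarith [hX x hXx, le_max_right B 0]

noncomputable def expLogRpow (a p x : ℝ) : ℝ := exp (a * log x ^ p)

noncomputable def jumpDrift (F : Measure ℝ) (V : ℝ → ℝ) (x : ℝ) : ℝ :=
  ∫ u in Ioi 0, (V (x + u) - V x) ∂F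

lemma expLogRpow_monotoneOn {a p : ℝ} (ha : 0 ≤ a) (hp : 0 ≤ p) :
    MonotoneOn (expLogRpow a p) (Ici 1) := fun _ hx _ _ hxy =>
  exp_le_exp.2 <| mul_le_mul_of_nonneg_left
    (rpow_le_rpow (log_nonneg hx) (log_le_log (zero_lt_one.trans_le hx) hxy) hp) ha

lemma log_rpow_mul_inv_mul_expLogRpow_sub_nonneg {a p x u : ℝ} (ha : 0 ≤ a) (hp : 0 ≤ p)
    (hx : 1 ≤ x) (hu : 0 ≤ u) :
    0 ≤ log x ^ (1 - p) * (expLogRpow a p x)⁻¹ * (expLogRpow a p (x + u) - expLogRpow a p x) := by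
  have hV := expLogRpow_monotoneOn ha hp hx (show 1 ≤ x + u by linarith) (by linarith)
  exact mul_nonneg (mul_nonneg (rpow_nonneg (log_nonneg hx) _) (inv_nonneg.2 (exp_pos _).le))
    (sub_nonneg.2 hV)

lemma log_rpow_mul_inv_mul_expLogRpow_sub_le {a p x u d : ℝ} (ha : 0 ≤ a) (hp0 : 0 < p)
    (hp1 : p ≤ 1) (hx : 1 < x) (hu : 0 ≤ u) (hd : log (x + u) - log x ≤ d) :
    log x ^ (1 - p) * (expLogRpow a p x)⁻¹ * (expLogRpow a p (x + u) - expLogRpow a p x)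
      ≤ a * p * d * exp (a * log (1 + u) ^ p) := by
  have hst : log x ≤ log (x + u) := log_le_log (by linarith) (by linarith)
  have hratio : (expLogRpow a p x)⁻¹ * (expLogRpow a p (x + u) - expLogRpow a p x)
      = exp (a * log (x + u) ^ p - a * log x ^ p) - 1 := by
    rw [exp_sub, expLogRpow, expLogRpow]; field_simp
  rw [mul_assoc, hratio]
  refine (rpow_one_sub_mul_exp_sub_one_le ha hp0 hp1 (log_pos hx) hst hd).trans ?_
  have hL := log_add_sub_log_le_log_one_add hx.le hu
  have hd0 : 0 ≤ d := (sub_nonneg.2 hst).trans hd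
  gcongr

lemma self_mul_deriv_expLogRpow {a p x : ℝ} (hx : 1 < x) :
    x * deriv (expLogRpow a p) x = a * p * log x ^ (p - 1) * expLogRpow a p x := by
  have h := (((hasDerivAt_log (by linarith)).rpow_const (p := p)
    (Or.inl (log_pos hx).ne')).const_mul a).exp
  unfold expLogRpow
  rw [h.deriv]
  field_simp

section JumpDrift

variable {F : Measure ℝ} {a p : ℝ}

lemma tendsto_log_rpow_mul_inv_mul_jumpDrift (ha : 0 ≤ a) (hp0 : 0 < p) (hp1 : p ≤ 1)
    (hint : Integrable (fun u => log (1 + u) * exp (a * log (1 + u) ^ p)) (F.restrict (Ioi 0))) :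
    Tendsto (fun x => log x ^ (1 - p) * (expLogRpow a p x)⁻¹ * jumpDrift F (expLogRpow a p) x)
      atTop (𝓝 0) := by
  set V := expLogRpow a p
  have hmeas : ∀ x, Measurable fun u => log x ^ (1 - p) * (V x)⁻¹ * (V (x + u) - V x) := by
    intro x; simp only [V, expLogRpow]; fun_prop
  have hlim : Tendsto (fun x => ∫ u in Ioi 0, log x ^ (1 - p) * (V x)⁻¹ * (V (x + u) - V x) ∂F)
      atTop (𝓝 (∫ _ in Ioi 0, (0 : ℝ) ∂F)) := by
    refine tendsto_integral_filter_of_dominated_convergence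
      (fun u => a * p * (log (1 + u) * exp (a * log (1 + u) ^ p)))
      (Eventually.of_forall fun x => (hmeas x).aestronglyMeasurable) ?_
      (hint.const_mul (a * p)) ?_
    · filter_upwards [eventually_gt_atTop 1] with x hx
      filter_upwards [self_mem_ae_restrict measurableSet_Ioi] with u hu
      rw [norm_of_nonneg (log_rpow_mul_inv_mul_expLogRpow_sub_nonneg ha hp0.le hx.le (le_of_lt hu)),
        ← mul_assoc]
      exact log_rpow_mul_inv_mul_expLogRpow_sub_le ha hp0 hp1 hx (le_of_lt hu)
        (log_add_sub_log_le_log_one_add hx.le (le_of_lt hu))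
    · filter_upwards [self_mem_ae_restrict measurableSet_Ioi] with u hu
      have hdecay : Tendsto (fun x => a * p * (u / x) * exp (a * log (1 + u) ^ p)) atTop (𝓝 0) := by
        simpa using ((tendsto_const_nhds.div_atTop tendsto_id).const_mul (a * p)).mul_const
          (exp (a * log (1 + u) ^ p))
      refine squeeze_zero' ?_ ?_ hdecay
      · filter_upwards [eventually_ge_atTop 1] with x hx
        exact log_rpow_mul_inv_mul_expLogRpow_sub_nonneg ha hp0.le hx (le_of_lt hu)
      · filter_upwards [eventually_gt_atTop 1] with x hx
        exact log_rpow_mul_inv_mul_expLogRpow_sub_le ha hp0 hp1 hx (le_of_lt hu)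
          (log_add_sub_log_le_div (zero_lt_one.trans hx) (le_of_lt hu))
  simpa only [jumpDrift, integral_zero, integral_const_mul] using hlim

lemma eventually_jumpDrift_le (ha : 0 ≤ a) (hp0 : 0 < p) (hp1 : p ≤ 1)
    (hint : Integrable (fun u => log (1 + u) * exp (a * log (1 + u) ^ p)) (F.restrict (Ioi 0)))
    {c : ℝ} (hc : 0 < c) :
    ∀ᶠ x in atTop, jumpDrift F (expLogRpow a p) x ≤ c * log x ^ (p - 1) * expLogRpow a p x := by
  filter_upwards [(tendsto_log_rpow_mul_inv_mul_jumpDrift ha hp0 hp1 hint).eventually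
    (eventually_le_nhds hc), eventually_gt_atTop 1] with x hG hx
  have hW : 0 < log x ^ (p - 1) * expLogRpow a p x := by
    have := log_pos hx; unfold expLogRpow; positivity
  have hinv : log x ^ (1 - p) * (expLogRpow a p x)⁻¹ = (log x ^ (p - 1) * expLogRpow a p x)⁻¹ := by
    rw [mul_inv, ← rpow_neg (log_pos hx).le, neg_sub]
  rw [hinv, inv_mul_le_iff₀ hW] at hG
  linarith

lemma jumpDrift_le_mul (ha : 0 ≤ a) (hp0 : 0 < p) (hp1 : p ≤ 1)
    (hint : Integrable (fun u => log (1 + u) * exp (a * log (1 + u) ^ p)) (F.restrict (Ioi 0)))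
    {x : ℝ} (hx : exp 1 ≤ x) :
    jumpDrift F (expLogRpow a p) x ≤
      (a * p * ∫ u in Ioi 0, log (1 + u) * exp (a * log (1 + u) ^ p) ∂F) * expLogRpow a p x := by
  have hx1 : 1 < x := lt_of_lt_of_le (one_lt_exp_iff.2 one_pos) hx
  have hs : 1 ≤ log x := (le_log_iff_exp_le (by linarith)).2 hx
  set V := expLogRpow a p
  have hV : 0 < V x := exp_pos _
  have hD : ∀ u, 0 ≤ u → 0 ≤ V (x + u) - V x := fun u hu => sub_nonneg.2 <|
    expLogRpow_monotoneOn ha hp0.le hx1.le (by simp only [mem_Ici]; linarith) (by linarith)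
  rw [mul_comm, jumpDrift, ← integral_const_mul, ← integral_const_mul]
  refine integral_mono_of_nonneg ?_ (hint.const_mul (a * p) |>.const_mul (V x)) ?_
  · filter_upwards [self_mem_ae_restrict measurableSet_Ioi] with u hu using hD u (le_of_lt hu)
  filter_upwards [self_mem_ae_restrict measurableSet_Ioi] with u hu
  have hbound := log_rpow_mul_inv_mul_expLogRpow_sub_le ha hp0 hp1 hx1 (le_of_lt hu)
    (log_add_sub_log_le_log_one_add hx1.le (le_of_lt hu))
  have := hD u (le_of_lt hu)
  rw [← inv_mul_le_iff₀ hV]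
  calc (V x)⁻¹ * (V (x + u) - V x) ≤ log x ^ (1 - p) * ((V x)⁻¹ * (V (x + u) - V x)) :=
        le_mul_of_one_le_left (by positivity) (one_le_rpow hs (by linarith))
    _ ≤ a * p * (log (1 + u) * exp (a * log (1 + u) ^ p)) := by
        rw [← mul_assoc]; exact hbound.trans_eq (by ring)

lemma bddAbove_jumpDrift_image_Icc (ha : 0 ≤ a) (hp0 : 0 < p) (hp1 : p ≤ 1)
    (hint : Integrable (fun u => log (1 + u) * exp (a * log (1 + u) ^ p)) (F.restrict (Ioi 0)))
    (X : ℝ) : BddAbove (jumpDrift F (expLogRpow a p) '' Icc (exp 1) X) := by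
  have hK : 0 ≤ a * p * ∫ u in Ioi 0, log (1 + u) * exp (a * log (1 + u) ^ p) ∂F :=
    mul_nonneg (by positivity) <| setIntegral_nonneg measurableSet_Ioi fun u hu =>
      mul_nonneg (log_nonneg (by linarith [mem_Ioi.1 hu])) (exp_pos _).le
  refine ⟨_, forall_mem_image.2 fun x hx => (jumpDrift_le_mul ha hp0 hp1 hint hx.1).trans
    (mul_le_mul_of_nonneg_left (expLogRpow_monotoneOn ha hp0.le ?_ ?_ hx.2) hK)⟩
  · exact (one_lt_exp_iff.2 one_pos).le.trans hx.1
  · exact (one_lt_exp_iff.2 one_pos).le.trans (hx.1.trans hx.2)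

end JumpDrift

theorem compound_poisson_OU_subexponential_drift_general
    (F : Measure ℝ) [IsProbabilityMeasure F]
    (δ α : ℝ) (hδ0 : 0 < δ) (hδ1 : δ < 1) (hα : 0 < α)
    (hF_int : (∫⁻ u in Set.Ioi (0:ℝ),
      ENNReal.ofReal (Real.exp (α * Real.log (1 + u) ^ δ)) ∂F) < ⊤)
    (δ' α' : ℝ) (hδ'0 : 0 < δ') (hδ'le : δ' ≤ δ) (hα' : 0 < α')
    (hcase : δ' = δ → α' < α)
    (V : ℝ → ℝ) (hV_def : ∀ x : ℝ, V x = Real.exp (α' * Real.log x ^ δ')) :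
    Tendsto
      (fun x : ℝ => Real.log x ^ (1 - δ') * (V x)⁻¹ *
        ∫ u in Set.Ioi (0:ℝ), (V (x + u) - V x) ∂F)
      atTop (nhds 0) ∧
    ∀ lam mu ε : ℝ, 0 < lam → 0 < mu → 0 < ε → ε < 1 →
      ∃ b : ℝ, ∀ x : ℝ, Real.exp 1 ≤ x →
        lam * (∫ u in Set.Ioi (0:ℝ), (V (x + u) - V x) ∂F) - mu * x * deriv V x
          ≤ -(1 - ε) * mu * α' * δ' * Real.log x ^ (δ' - 1) * V x + b := by
  obtain rfl : V = expLogRpow α' δ' := funext hV_def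
  have hδ'1 : δ' ≤ 1 := hδ'le.trans hδ1.le
  have hexp_int : Integrable (fun u => exp (α * log (1 + u) ^ δ)) (F.restrict (Ioi 0)) :=
    ⟨(by fun_prop : Measurable _).aestronglyMeasurable,
      (hasFiniteIntegral_iff_ofReal (Eventually.of_forall fun _ => (exp_pos _).le)).2 hF_int⟩
  have hint : Integrable (fun u => log (1 + u) * exp (α' * log (1 + u) ^ δ'))
      (F.restrict (Ioi 0)) :=
    integrable_mul_exp_rpow hα hα'.le hδ0 hδ'0.le hδ'le hcase (by fun_prop)
      (ae_restrict_of_forall_mem measurableSet_Ioi fun u hu =>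
        log_nonneg (by linarith [mem_Ioi.1 hu])) hexp_int
  refine ⟨tendsto_log_rpow_mul_inv_mul_jumpDrift hα'.le hδ'0 hδ'1 hint,
    fun lam mu ε hlam hmu hε0 hε1 => ?_⟩
  set c := ε * mu * α' * δ' / lam
  obtain ⟨b, hb⟩ := exists_le_add_of_eventually_le_of_bddAbove
    (eventually_jumpDrift_le hα'.le hδ'0 hδ'1 hint (by positivity : 0 < c))
    (bddAbove_jumpDrift_image_Icc hα'.le hδ'0 hδ'1 hint) (fun x hx => by
      have := log_pos (lt_of_lt_of_le (one_lt_exp_iff.2 one_pos) hx); unfold expLogRpow; positivity)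
  refine ⟨lam * b, fun x hx => ?_⟩
  have hx1 : 1 < x := lt_of_lt_of_le (one_lt_exp_iff.2 one_pos) hx
  have hJ := mul_le_mul_of_nonneg_left (hb x hx) hlam.le
  have hlam_c : lam * c = ε * mu * α' * δ' := by simp only [c]; field_simp
  rw [jumpDrift] at hJ
  rw [mul_assoc mu, self_mul_deriv_expLogRpow hx1]
  linear_combination hJ + (log x ^ (δ' - 1) * expLogRpow α' δ' x) * hlam_c

/-- Drift computation for the compound-Poisson-driven Ornstein-Uhlenbeck process with
heavy-tailed jump law `F`: if `∫₀^∞ e^{α(log(1+u))^δ} F(du) < ∞`, `0 < δ' ≤ δ`,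
`α' > 0` (with `α' < α` when `δ' = δ`) and `V(x) = exp(α'(log x)^{δ'})`, then
(a) `(log x)^{1-δ'} V(x)⁻¹ ∫₀^∞ (V(x+u) - V(x)) F(du) → 0` as `x → ∞`, and
(b) for all `λ, μ > 0` and `ε ∈ (0,1)` there is `b < ∞` such that for all `x ≥ e`,
`λ∫₀^∞(V(x+u)-V(x))F(du) - μ x V'(x) ≤ -(1-ε) μ α' δ' (log x)^{δ'-1} V(x) + b`. -/
theorem compound_poisson_OU_subexponential_drift
    (F : Measure ℝ) [IsProbabilityMeasure F] (hF_supp : F (Set.Iic 0) = 0)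
    (δ α : ℝ) (hδ0 : 0 < δ) (hδ1 : δ < 1) (hα : 0 < α)
    (hF_int : (∫⁻ u in Set.Ioi (0:ℝ),
      ENNReal.ofReal (Real.exp (α * Real.log (1 + u) ^ δ)) ∂F) < ⊤)
    (δ' α' : ℝ) (hδ'0 : 0 < δ') (hδ'le : δ' ≤ δ) (hα' : 0 < α')
    (hcase : δ' = δ → α' < α)
    (V : ℝ → ℝ) (hV_def : ∀ x : ℝ, V x = Real.exp (α' * Real.log x ^ δ')) :
    Tendsto
      (fun x : ℝ => Real.log x ^ (1 - δ') * (V x)⁻¹ *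
        ∫ u in Set.Ioi (0:ℝ), (V (x + u) - V x) ∂F)
      atTop (nhds 0) ∧
    ∀ lam mu ε : ℝ, 0 < lam → 0 < mu → 0 < ε → ε < 1 →
      ∃ b : ℝ, ∀ x : ℝ, Real.exp 1 ≤ x →
        lam * (∫ u in Set.Ioi (0:ℝ), (V (x + u) - V x) ∂F) - mu * x * deriv V x
          ≤ -(1 - ε) * mu * α' * δ' * Real.log x ^ (δ' - 1) * V x + b :=
  compound_poisson_OU_subexponential_drift_general F δ α hδ0 hδ1 hα hF_int δ' α' hδ'0 hδ'le hα'
    hcase V hV_def
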